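/- arXiv:2512.23425 — 2 statements merged into one kernel-verified Lean document; each statement's English description precedes it below -/
import Mathlib

section
/- Let (U_1,…,U_n) be a trajectory of a stationary and ergodic Z-valued process {Z_t = (X_t,Y_t) : t∈ℤ} satisfying (A4). Let G be a set of real-valued measurable functions on Z such that, for some constants C_1, C_2 ≥ 0, |g(U_1) − E[g(U_1)]| ≤ C_1 almost surely and E[g(U_1)²] ≤ C_2 E[g(U_1)] for every g ∈ G. Then there exists a constant c > 0, independent of n, ε and u, such that for all ε > 0 and 0 < u ≤ 1 and all n ≥ n_0: P{ sup_{g∈G} (E[g(U_1)] − (1/n)Σ_{i=1}^n g(U_i)) / √(E[g(U_1)] + ε) ≥ 4u√ε } ≤ c · N(G, uε) · exp(−u²ε φ(n)/(c_γ C_2 + c_A C_1)). -/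
open MeasureTheory Real
open scoped BigOperators Classical ENNReal NNReal

noncomputable section

/-! ### Deep (feedforward) neural networks -/

/-- A feedforward neural network with input dimension `d`:
`depth` hidden layers, width vector `width`, weight matrices `weight j` and
shift vectors `bias j` (so that `A_{j+1}(x) = weight j *ᵥ x + bias j`). -/
structure DNN (d : ℕ) where
  depth : ℕ
  width : ℕ → ℕ
  weight : (j : ℕ) → Matrix (Fin (width (j + 1))) (Fin (width j)) ℝ
  bias : (j : ℕ) → Fin (width (j + 1)) → ℝ
  width_zero : width 0 = d
  width_last : width (depth + 1) = 1

namespace DNN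

variable {d : ℕ}

/-- Output of the `j`-th hidden layer: `σ_j ∘ A_j ∘ ⋯ ∘ σ_1 ∘ A_1`. -/
def hidden (σ : ℝ → ℝ) (net : DNN d) :
    (j : ℕ) → (Fin (net.width 0) → ℝ) → Fin (net.width j) → ℝ
  | 0, x => x
  | j + 1, x => fun i => σ (((net.weight j).mulVec (hidden σ net j x)) i + net.bias j i)

/-- The function `ℝ^d → ℝ` computed by the network:
`A_{L+1} ∘ σ_L ∘ A_L ∘ ⋯ ∘ σ_1 ∘ A_1` (no activation on the output layer). -/
def realize (σ : ℝ → ℝ) (net : DNN d) (x : Fin d → ℝ) : ℝ :=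
  (((net.weight net.depth).mulVec
      (hidden σ net net.depth fun i => x (Fin.cast net.width_zero i))) +
    net.bias net.depth) (Fin.cast net.width_last.symm 0)

/-- `‖θ(h)‖_∞ ≤ B` : all network parameters are bounded by `B`. -/
def paramBound (net : DNN d) (B : ℝ) : Prop :=
  ∀ j ≤ net.depth, (∀ i k, |net.weight j i k| ≤ B) ∧ ∀ i, |net.bias j i| ≤ B

/-- `‖θ(h)‖₀` : the number of nonzero parameters of the network. -/
def sparsity (net : DNN d) : ℕ :=
  ∑ j ∈ Finset.range (net.depth + 1),
    (((Finset.univ : Finset (Fin (net.width (j + 1)) × Fin (net.width j))).filter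
        fun p => net.weight j p.1 p.2 ≠ 0).card +
      ((Finset.univ : Finset (Fin (net.width (j + 1)))).filter fun i => net.bias j i ≠ 0).card)

end DNN

/-- The networks realizing the class `H_σ(L, N, B, F)` (depth ≤ L, width ≤ N,
`‖θ‖_∞ ≤ B`, `‖h‖_{∞,X} ≤ F`). -/
def netClass (σ : ℝ → ℝ) (d : ℕ) (X : Set (Fin d → ℝ)) (L N B F : ℝ) : Set (DNN d) :=
  {net | (net.depth : ℝ) ≤ L ∧ (∀ j, 1 ≤ j → j ≤ net.depth → (net.width j : ℝ) ≤ N) ∧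
    net.paramBound B ∧ ∀ x ∈ X, |net.realize σ x| ≤ F}

/-- The networks realizing the sparsity constrained class `H_σ(L, N, B, F, S)`. -/
def netClassS (σ : ℝ → ℝ) (d : ℕ) (X : Set (Fin d → ℝ)) (L N B F S : ℝ) : Set (DNN d) :=
  {net | net ∈ netClass σ d X L N B F ∧ (net.sparsity : ℝ) ≤ S}

/-- The class of DNN predictors `H_σ(L, N, B, F)`. -/
def HClass (σ : ℝ → ℝ) (d : ℕ) (X : Set (Fin d → ℝ)) (L N B F : ℝ) :
    Set ((Fin d → ℝ) → ℝ) :=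
  {h | ∃ net ∈ netClass σ d X L N B F, h = net.realize σ}

/-- The sparsity constrained class of DNN predictors `H_σ(L, N, B, F, S)`. -/
def HClassS (σ : ℝ → ℝ) (d : ℕ) (X : Set (Fin d → ℝ)) (L N B F S : ℝ) :
    Set ((Fin d → ℝ) → ℝ) :=
  {h | ∃ net ∈ netClassS σ d X L N B F S, h = net.realize σ}

/-! ### Hölder balls -/

/-- The largest integer strictly smaller than `β` (for `β > 0`). -/
def sfloor (β : ℝ) : ℕ := ⌈β⌉₊ - 1

/-- Partial derivative in the `i`-th coordinate. -/
def pderiv {m : ℕ} (i : Fin m) (h : (Fin m → ℝ) → ℝ) : (Fin m → ℝ) → ℝ :=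
  fun x => deriv (fun t => h (Function.update x i t)) (x i)

/-- `∂^α h` for a multi-index `α`. -/
def multiPderiv {m : ℕ} (α : Fin m → ℕ) (h : (Fin m → ℝ) → ℝ) : (Fin m → ℝ) → ℝ :=
  (List.finRange m).foldr (fun i f => (pderiv i)^[α i] f) h

/-- The Hölder norm of `h` on the domain `D`. -/
def holderNorm {m : ℕ} (D : Set (Fin m → ℝ)) (β : ℝ) (h : (Fin m → ℝ) → ℝ) : ℝ :=
  (∑ α ∈ (Fintype.piFinset fun _ : Fin m => Finset.range (sfloor β + 1)).filter
      (fun α => ((∑ i, α i : ℕ) : ℝ) < β),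
      ⨆ x ∈ D, |multiPderiv α h x|) +
  ∑ α ∈ (Fintype.piFinset fun _ : Fin m => Finset.range (sfloor β + 1)).filter
      (fun α => (∑ i, α i) = sfloor β),
      ⨆ x ∈ D, ⨆ y ∈ D, ⨆ _ : x ≠ y,
        |multiPderiv α h x - multiPderiv α h y| / ‖x - y‖ ^ (β - (sfloor β : ℝ))

/-- The ball of `β`-Hölder functions on `D` with radius `A`. -/
def holderBall {m : ℕ} (D : Set (Fin m → ℝ)) (β A : ℝ) : Set ((Fin m → ℝ) → ℝ) :=
  {h | holderNorm D β h ≤ A}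

/-! ### Composition Hölder functions -/

/-- The cube `[l,u]^m`. -/
def cube (m : ℕ) (l u : ℝ) : Set (Fin m → ℝ) := {x | ∀ i, x i ∈ Set.Icc l u}

/-- `f` depends on at most `t` of its coordinates. -/
def dependsOnAtMost {m : ℕ} (t : ℕ) (f : (Fin m → ℝ) → ℝ) : Prop :=
  ∃ T : Finset (Fin m), T.card ≤ t ∧ ∀ x y : Fin m → ℝ, (∀ i ∈ T, x i = y i) → f x = f y

/-- Composition `g_{i-1} ∘ ⋯ ∘ g_0`. -/
def chainComp (dv : ℕ → ℕ) (g : (i : ℕ) → (Fin (dv i) → ℝ) → Fin (dv (i + 1)) → ℝ) :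
    (i : ℕ) → (Fin (dv 0) → ℝ) → Fin (dv i) → ℝ
  | 0, x => x
  | i + 1, x => g i (chainComp dv g i x)

/-- The class `G(q, d, t, β, A)` of composition Hölder functions. -/
def compClass (q dIn : ℕ) (dv tv : ℕ → ℕ) (βv : ℕ → ℝ) (A : ℝ)
    (hd0 : dv 0 = dIn) (hdq : dv (q + 1) = 1) : Set ((Fin dIn → ℝ) → ℝ) :=
  {h | ∃ (l u : ℕ → ℝ) (g : (i : ℕ) → (Fin (dv i) → ℝ) → Fin (dv (i + 1)) → ℝ),
    (∀ i ≤ q + 1, |l i| ≤ A ∧ |u i| ≤ A ∧ l i ≤ u i) ∧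
    (∀ i ≤ q, ∀ x ∈ cube (dv i) (l i) (u i), ∀ j, g i x j ∈ Set.Icc (l (i + 1)) (u (i + 1))) ∧
    (∀ i ≤ q, ∀ j, dependsOnAtMost (tv i) (fun x => g i x j) ∧
      (fun x => g i x j) ∈ holderBall (cube (dv i) (l i) (u i)) (βv i) A) ∧
    ∀ x : Fin dIn → ℝ,
      h x = chainComp dv g (q + 1) (fun k => x (Fin.cast hd0 k)) (Fin.cast hdq.symm 0)}

/-- The effective smoothness `β_i* = β_i ∏_{j=i+1}^q (β_j ∧ 1)`. -/
def betaStar (q : ℕ) (βv : ℕ → ℝ) (i : ℕ) : ℝ :=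
  βv i * ∏ j ∈ Finset.Icc (i + 1) q, min (βv j) 1

/-- `φ_{n,φ} = max_{0 ≤ i ≤ q} x^{-2β_i*/(2β_i* + t_i)}` evaluated at `x`. -/
def phiRate (q : ℕ) (βv : ℕ → ℝ) (tv : ℕ → ℕ) (x : ℝ) : ℝ :=
  (Finset.range (q + 1)).sup'
    (Finset.nonempty_range_iff.mpr (Nat.succ_ne_zero q))
    fun i => x ^ (-(2 * betaStar q βv i) / (2 * betaStar q βv i + tv i))

/-! ### Activation functions : assumption (A1) -/

/-- `g` is affine on the set `s`. -/
def AffineOn (g : ℝ → ℝ) (s : Set ℝ) : Prop := ∃ a b : ℝ, ∀ x ∈ s, g x = a * x + b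

/-- Continuous piecewise linear function. -/
def PiecewiseLinear (g : ℝ → ℝ) : Prop :=
  Continuous g ∧
    ∃ (K : ℕ) (a : ℕ → ℝ), 0 < K ∧ (∀ k, k + 1 < K → a k ≤ a (k + 1)) ∧
      (∀ k < K, derivWithin g (Set.Iio (a k)) (a k) ≠ derivWithin g (Set.Ioi (a k)) (a k)) ∧
      AffineOn g (Set.Iic (a 0)) ∧ AffineOn g (Set.Ici (a (K - 1))) ∧
      ∀ k, k + 1 < K → AffineOn g (Set.Icc (a k) (a (k + 1)))

/-- Locally quadratic function. -/
def LocallyQuadratic (g : ℝ → ℝ) : Prop :=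
  ∃ a b : ℝ, a < b ∧ ContDiffOn ℝ 3 g (Set.Ioo a b) ∧
    (∃ M : ℝ, ∀ x ∈ Set.Ioo a b, ∀ n ≤ 3, |iteratedDerivWithin n g (Set.Ioo a b) x| ≤ M) ∧
    ∃ t ∈ Set.Ioo a b, deriv g t ≠ 0 ∧ deriv (deriv g) t ≠ 0

/-- Assumption (A1) on the activation function. -/
def AssumptionA1 (σ : ℝ → ℝ) (Cσ : ℝ) : Prop :=
  0 < Cσ ∧ (∀ x y : ℝ, |σ x - σ y| ≤ Cσ * |x - y|) ∧
    (PiecewiseLinear σ ∨ LocallyQuadratic σ) ∧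
    ∃ v w : ℝ, v < w ∧ Set.Icc v w ⊆ Set.Icc (0 : ℝ) 1 ∧ ∀ z ∈ Set.Icc v w, σ z = z

/-! ### Risks, estimators, penalties -/

/-- The risk `R(h) = E[ℓ(h(X₀), Y₀)]`. -/
def risk {Ω : Type*} [MeasurableSpace Ω] (P : Measure Ω) {d : ℕ}
    (Z : ℤ → Ω → (Fin d → ℝ) × ℝ) (ℓ : ℝ → ℝ → ℝ) (h : (Fin d → ℝ) → ℝ) : ℝ :=
  ∫ ω, ℓ (h (Z 0 ω).1) (Z 0 ω).2 ∂P

/-- The empirical risk `(1/n) ∑_{i=1}^n ℓ(h(X_i), Y_i)`. -/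
def empRisk {Ω : Type*} {d : ℕ} (Z : ℤ → Ω → (Fin d → ℝ) × ℝ) (ℓ : ℝ → ℝ → ℝ)
    (n : ℕ) (h : (Fin d → ℝ) → ℝ) (ω : Ω) : ℝ :=
  (n : ℝ)⁻¹ * ∑ i ∈ Finset.Icc 1 n, ℓ (h (Z i ω).1) (Z i ω).2

/-- `g(h, z) = ℓ(h(x), y) - ℓ(h*(x), y)` for `z = (x, y)`. -/
def lossDiff {d : ℕ} (ℓ : ℝ → ℝ → ℝ) (hstar h : (Fin d → ℝ) → ℝ)
    (z : (Fin d → ℝ) × ℝ) : ℝ :=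
  ℓ (h z.1) z.2 - ℓ (hstar z.1) z.2

/-- The sparse penalty `J_n(h) = ∑_j π(|θ_j(h)|)`. -/
def penalty {d : ℕ} (pen : ℝ → ℝ) (net : DNN d) : ℝ :=
  ∑ j ∈ Finset.range (net.depth + 1),
    ((∑ i, ∑ k, pen |net.weight j i k|) + ∑ i, pen |net.bias j i|)

/-- The sparsity constrained class with the architecture of the NPDNN Hölder theorem,
with size parameter `r` (i.e. `r = φ(n)`). -/
def archClassR (σ : ℝ → ℝ) (d : ℕ) (X : Set (Fin d → ℝ)) (κ s L₀ N₀ B₀ S₀ F r : ℝ) :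
    Set ((Fin d → ℝ) → ℝ) :=
  HClassS σ d X (s * L₀ / (κ * s + d) * Real.log r)
    (N₀ * r ^ ((d : ℝ) / (κ * s + d)))
    (B₀ * r ^ (4 * ((d : ℝ) + s) / (κ * s + d)))
    F
    (s * S₀ / (κ * s + d) * r ^ ((d : ℝ) / (κ * s + d)) * Real.log r)

/-- `u_n ≲ v_n`. -/
def Lesssim (u v : ℕ → ℝ) : Prop := ∃ c : ℝ, 0 < c ∧ ∀ n, u n ≤ c * v n

/-- `u_n ≍ v_n`. -/
def Asymp (u v : ℕ → ℝ) : Prop := Lesssim u v ∧ Lesssim v u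

/-! ### Covering numbers, mixing coefficients, Huber loss -/

/-- `ε`-covering number of a class of real valued functions (w.r.t. the sup norm). -/
def coveringNumber {α : Type*} (G : Set (α → ℝ)) (ε : ℝ) : ℕ∞ :=
  sInf ((↑) '' {k : ℕ | ∃ f : Fin k → α → ℝ, ∀ g ∈ G, ∃ i, ∀ x, |g x - f i x| ≤ ε})

/-- σ-algebra generated by `Z_t, t ≤ 0`. -/
def pastSigma {Ω E : Type*} [MeasurableSpace E] (Z : ℤ → Ω → E) : MeasurableSpace Ω :=
  ⨆ t : {t : ℤ // t ≤ 0}, MeasurableSpace.comap (Z t) inferInstance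

/-- σ-algebra generated by `Z_t, t ≥ k`. -/
def futureSigma {Ω E : Type*} [MeasurableSpace E] (Z : ℤ → Ω → E) (k : ℕ) :
    MeasurableSpace Ω :=
  ⨆ t : {t : ℤ // (k : ℤ) ≤ t}, MeasurableSpace.comap (Z t) inferInstance

/-- The `α`-mixing coefficient of the process `Z`. -/
def alphaMix {Ω E : Type*} [MeasurableSpace Ω] [MeasurableSpace E]
    (P : Measure Ω) (Z : ℤ → Ω → E) (k : ℕ) : ℝ :=
  ⨆ A : {A : Set Ω // MeasurableSet[pastSigma Z] A},
    ⨆ B : {B : Set Ω // MeasurableSet[futureSigma Z k] B},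
      |(P (↑A ∩ ↑B)).toReal - (P ↑A).toReal * (P ↑B).toReal|

/-- The Huber loss with parameter `δ`. -/
def huber (δ : ℝ) (y y' : ℝ) : ℝ :=
  if |y - y'| ≤ δ then (y - y') ^ 2 / 2 else δ * |y - y'| - δ ^ 2 / 2

end

/-! For a single `g`, clamping `m - g` to `[-C₁, C₁]` (with `m = E[g(Z₁)]`) changes, by
stationarity, none of the values `g(Zᵢ)` almost surely, and the clamped function is centred,
bounded by `C₁` and has second moment at most `C₂ m`. So (A4) applies at level
`t = u √ε √(m + ε)`, and since `t² = u² ε (m + ε)` and `t ≤ m + ε` its exponent is at least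
`u² ε φ(n) / (c_γ C₂ + c_A C₁)`. For the supremum, pick in each cell of a minimal `uε`-cover
an element of `G` whose mean is within `uε/8` of the largest mean in that cell: a function
whose normalized deviation exceeds `(4 - 1/8) u √ε` passes a normalized deviation of at
least `u √ε` on to its representative, and a union bound over the representatives
concludes. -/

lemma exists_lt_of_lt_biSup {ι : Type*} {s : Set ι} {F : ι → ℝ} {b : ℝ}
    (h0 : 0 < ⨆ i ∈ s, F i) (hb : b < ⨆ i ∈ s, F i) : ∃ i ∈ s, b < F i := by
  by_contra! h
  have : (⨆ i ∈ s, F i) ≤ max b 0 :=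
    Real.iSup_le (fun i => Real.iSup_le (fun hi => le_max_of_le_left (h i hi)) (le_max_right _ _))
      (le_max_right _ _)
  exact (max_lt hb h0).not_ge this

lemma exists_forall_le_add_of_bddAbove {ι : Type*} {s : Set ι} {F : ι → ℝ} {δ : ℝ}
    (hs : s.Nonempty) (hF : BddAbove (F '' s)) (hδ : 0 < δ) :
    ∃ i ∈ s, ∀ j ∈ s, F j ≤ F i + δ := by
  obtain ⟨_, ⟨i, hi, rfl⟩, hlt⟩ :=
    exists_lt_of_lt_csSup (hs.image F) (sub_lt_self (sSup (F '' s)) hδ)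
  exact ⟨i, hi, fun j hj => by linarith [le_csSup hF (Set.mem_image_of_mem F hj)]⟩

lemma deviation_le_of_close {a m s s' u ε : ℝ} (hε : 0 < ε) (hu : 0 < u) (hu1 : u ≤ 1)
    (ha : 0 ≤ a) (ham : a ≤ m + u * ε / 8) (hma : m ≤ a + 2 * (u * ε))
    (hs : s' ≤ s + 2 * (u * ε)) (hdev : (4 - 1 / 8) * (u * √ε) * √(a + ε) < a - s) :
    u * √ε * √(m + ε) ≤ m - s' := by
  -- `m + ε ≤ 3 (a + ε) ≤ (7/4)² (a + ε)`, and `a - s - (uε/8 + 2uε)` exceeds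
  -- `(31/8 - 17/8) u √ε √(a + ε)` because `uε ≤ u √ε √(a + ε)`.
  have hsqrt : √(m + ε) ≤ 7 / 4 * √(a + ε) := by
    rw [Real.sqrt_le_left (by positivity), mul_pow, Real.sq_sqrt (by positivity)]
    nlinarith
  have huε : u * ε ≤ u * √ε * √(a + ε) := by
    rw [mul_assoc, ← Real.sqrt_mul hε.le]
    exact mul_le_mul_of_nonneg_left (Real.le_sqrt_of_sq_le (by nlinarith)) hu.le
  have := mul_le_mul_of_nonneg_left hsqrt (by positivity : 0 ≤ u * √ε)
  nlinarith

lemma bernstein_exponent_le {cγ cA C₁ C₂ m u ε k : ℝ} (hcγ : 0 ≤ cγ) (hcA : 0 < cA)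
    (hC₁ : 0 < C₁) (hC₂ : 0 ≤ C₂) (hm : 0 ≤ m) (hε : 0 < ε) (hu : 0 < u) (hu1 : u ≤ 1)
    (hk : 0 ≤ k) :
    -((u * √ε * √(m + ε)) ^ 2 * k) / (cγ * (C₂ * m) + cA * (u * √ε * √(m + ε)) * C₁) ≤
      -(u ^ 2 * ε * k) / (cγ * C₂ + cA * C₁) := by
  set t := u * √ε * √(m + ε)
  have ht2 : t ^ 2 = u ^ 2 * ε * (m + ε) := by
    rw [mul_pow, mul_pow, Real.sq_sqrt hε.le, Real.sq_sqrt (by positivity)]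
  have htm : t ≤ m + ε := by
    have : √ε ≤ √(m + ε) := Real.sqrt_le_sqrt (by linarith)
    calc t ≤ 1 * √(m + ε) * √(m + ε) :=
          mul_le_mul_of_nonneg_right (mul_le_mul hu1 this (by positivity) zero_le_one)
            (by positivity)
      _ = m + ε := by rw [one_mul, Real.mul_self_sqrt (by positivity)]
  have hden : cγ * (C₂ * m) + cA * t * C₁ ≤ (m + ε) * (cγ * C₂ + cA * C₁) := by
    nlinarith [mul_le_mul_of_nonneg_left htm (mul_nonneg hcA.le hC₁.le),
      mul_nonneg (mul_nonneg hcγ hC₂) hε.le]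
  rw [neg_div, neg_div, neg_le_neg_iff, div_le_div_iff₀ (by positivity) (by positivity), ht2]
  have := mul_le_mul_of_nonneg_left hden (by positivity : 0 ≤ u ^ 2 * ε * k)
  nlinarith

lemma le_coveringNumber_mul {α : Type*} {G : Set (α → ℝ)} {r : ℝ} {a p : ℝ≥0∞} (hp : p ≠ 0)
    (h : ∀ (k : ℕ) (f : Fin k → α → ℝ), (∀ g ∈ G, ∃ i, ∀ x, |g x - f i x| ≤ r) → a ≤ k * p) :
    a ≤ (coveringNumber G r : ℝ≥0∞) * p := by
  set K := {k : ℕ | ∃ f : Fin k → α → ℝ, ∀ g ∈ G, ∃ i, ∀ x, |g x - f i x| ≤ r}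
  by_cases hK : K.Nonempty
  · have hN : coveringNumber G r = (sInf K : ℕ) := by
      rw [coveringNumber, sInf_image, ENat.natCast_sInf hK]
    obtain ⟨f, hf⟩ := Nat.sInf_mem hK
    simpa [hN] using h _ f hf
  · have hN : coveringNumber G r = ⊤ := by
      change sInf (Nat.cast '' K) = ⊤
      simp [Set.not_nonempty_iff_eq_empty.mp hK]
    simp [hN, ENNReal.top_mul hp]

lemma exists_finset_net_near_max {α : Type*} {G : Set (α → ℝ)} {M : (α → ℝ) → ℝ} {r δ : ℝ}
    (hM : ∀ g ∈ G, ∀ g' ∈ G, (∀ x, |g x - g' x| ≤ 2 * r) → M g ≤ M g' + 2 * r)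
    (hδ : 0 < δ) {k : ℕ} (f : Fin k → α → ℝ) (hf : ∀ g ∈ G, ∃ i, ∀ x, |g x - f i x| ≤ r) :
    ∃ S : Finset (α → ℝ), S.card ≤ k ∧ ↑S ⊆ G ∧
      ∀ g ∈ G, ∃ g' ∈ S, (∀ x, |g x - g' x| ≤ 2 * r) ∧ M g ≤ M g' + δ := by
  let cell (i : Fin k) : Set (α → ℝ) := {g | g ∈ G ∧ ∀ x, |g x - f i x| ≤ r}
  have close_of_mem_cell {i g g'} (hg : g ∈ cell i) (hg' : g' ∈ cell i) (x : α) :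
      |g x - g' x| ≤ 2 * r := by
    linarith [abs_sub_le (g x) (f i x) (g' x), hg.2 x, abs_sub_comm (f i x) (g' x), hg'.2 x]
  have hrep (i : Fin k) : ∃ g' : α → ℝ, (cell i).Nonempty →
      g' ∈ cell i ∧ ∀ g ∈ cell i, M g ≤ M g' + δ := by
    by_cases hne : (cell i).Nonempty
    · obtain ⟨g₁, hg₁⟩ := hne
      have hbdd : BddAbove (M '' cell i) := ⟨M g₁ + 2 * r, by
        rintro _ ⟨g, hg, rfl⟩
        exact hM g hg.1 g₁ hg₁.1 (close_of_mem_cell hg hg₁)⟩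
      obtain ⟨g', hg', hmax⟩ := exists_forall_le_add_of_bddAbove ⟨g₁, hg₁⟩ hbdd hδ
      exact ⟨g', fun _ => ⟨hg', hmax⟩⟩
    · exact ⟨0, fun h => absurd h hne⟩
  choose rep hrep using hrep
  refine ⟨(Finset.univ.filter fun i => (cell i).Nonempty).image rep, ?_, ?_, ?_⟩
  · exact Finset.card_image_le.trans ((Finset.card_filter_le _ _).trans (by simp))
  · intro g hg
    obtain ⟨i, hi, rfl⟩ := Finset.mem_image.mp hg
    exact ((hrep i (Finset.mem_filter.mp hi).2).1).1
  · intro g hg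
    obtain ⟨i, hi⟩ := hf g hg
    have hne : (cell i).Nonempty := ⟨g, hg, hi⟩
    obtain ⟨hrepi, hmax⟩ := hrep i hne
    exact ⟨rep i, Finset.mem_image_of_mem rep (by simpa using hne),
      close_of_mem_cell ⟨hg, hi⟩ hrepi, hmax g ⟨hg, hi⟩⟩

section EmpiricalMean

variable {Ω E : Type*} {Z : ℤ → Ω → E}

noncomputable def empMean (Z : ℤ → Ω → E) (n : ℕ) (g : E → ℝ) (ω : Ω) : ℝ :=
  (n : ℝ)⁻¹ * ∑ i ∈ Finset.Icc 1 n, g (Z i ω)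

lemma empMean_le_add {n : ℕ} {f g : E → ℝ} {r : ℝ} (hr : 0 ≤ r) (h : ∀ x, |g x - f x| ≤ r)
    (ω : Ω) : empMean Z n g ω ≤ empMean Z n f ω + r := by
  rcases Nat.eq_zero_or_pos n with rfl | hn
  · simpa [empMean] using hr
  have hsum : ∑ i ∈ Finset.Icc 1 n, g (Z i ω) ≤ ∑ i ∈ Finset.Icc 1 n, f (Z i ω) + n * r :=
    calc ∑ i ∈ Finset.Icc 1 n, g (Z i ω) ≤ ∑ i ∈ Finset.Icc 1 n, (f (Z i ω) + r) :=
          Finset.sum_le_sum fun i _ => by linarith [(abs_le.mp (h (Z i ω))).2]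
      _ = ∑ i ∈ Finset.Icc 1 n, f (Z i ω) + n * r := by simp [Finset.sum_add_distrib]
  calc empMean Z n g ω ≤ (n : ℝ)⁻¹ * (∑ i ∈ Finset.Icc 1 n, f (Z i ω) + n * r) := by
        unfold empMean; gcongr
    _ = empMean Z n f ω + r := by unfold empMean; field_simp

lemma empMean_eq_const_sub {n : ℕ} (hn : n ≠ 0) {f g : E → ℝ} {m : ℝ} {ω : Ω}
    (h : ∀ i ∈ Finset.Icc 1 n, f (Z i ω) = m - g (Z i ω)) :
    empMean Z n f ω = m - empMean Z n g ω := by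
  unfold empMean
  rw [Finset.sum_congr rfl h, Finset.sum_sub_distrib, Finset.sum_const, Nat.card_Icc,
    Nat.add_sub_cancel, nsmul_eq_mul]
  field_simp

lemma setOf_le_biSup_subset_biUnion {G : Set (E → ℝ)} {S : Finset (E → ℝ)}
    {M : (E → ℝ) → ℝ} {n : ℕ} {u ε : ℝ} (hε : 0 < ε) (hu : 0 < u) (hu1 : u ≤ 1)
    (hSG : ↑S ⊆ G) (hM0 : ∀ g ∈ G, 0 ≤ M g)
    (hM : ∀ g ∈ G, ∀ g' ∈ G, (∀ x, |g x - g' x| ≤ 2 * (u * ε)) → M g ≤ M g' + 2 * (u * ε))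
    (hnet : ∀ g ∈ G, ∃ g' ∈ S, (∀ x, |g x - g' x| ≤ 2 * (u * ε)) ∧ M g ≤ M g' + u * ε / 8) :
    {ω | 4 * u * √ε ≤ ⨆ g ∈ G, (M g - empMean Z n g ω) / √(M g + ε)} ⊆
      ⋃ g ∈ S, {ω | u * √ε * √(M g + ε) ≤ M g - empMean Z n g ω} := by
  intro ω hω
  have hpos : 0 < 4 * u * √ε := by positivity
  have hslack : (4 - 1 / 8) * (u * √ε) < 4 * u * √ε := by nlinarith
  obtain ⟨g, hg, hlt⟩ := exists_lt_of_lt_biSup (hpos.trans_le hω) (hslack.trans_le hω)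
  obtain ⟨g', hg'S, hclose, hmax⟩ := hnet g hg
  have hclose' (x : E) : |g' x - g x| ≤ 2 * (u * ε) := abs_sub_comm (g x) (g' x) ▸ hclose x
  have hsqrt : 0 < √(M g + ε) := Real.sqrt_pos.mpr (by linarith [hM0 g hg])
  exact Set.mem_biUnion hg'S <| deviation_le_of_close hε hu hu1 (hM0 g hg) hmax
    (hM g' (hSG hg'S) g hg hclose') (empMean_le_add (by positivity) hclose' ω)
    ((lt_div_iff₀ hsqrt).mp hlt)

end EmpiricalMean

section Stationary

variable {Ω E : Type*} [MeasurableSpace Ω]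

noncomputable def popMean (P : Measure Ω) (Z : ℤ → Ω → E) (g : E → ℝ) : ℝ := ∫ ω, g (Z 1 ω) ∂P

/-- Assumption (A4). -/
def BernsteinCondition [MeasurableSpace E] (P : Measure Ω) (Z : ℤ → Ω → E) (φ : ℕ → ℕ)
    (C cγ cA : ℝ) (n₀ : ℕ) : Prop :=
  ∀ (g : E → ℝ) (γ A : ℝ), 0 ≤ γ → 0 < A → Measurable g →
    (∀ z, |g z| ≤ A) → popMean P Z g = 0 → (∫ ω, g (Z 1 ω) ^ 2 ∂P) ≤ γ ^ 2 →
    ∀ ε : ℝ, 0 < ε → ∀ n : ℕ, n₀ ≤ n →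
      (P {ω | ε ≤ empMean Z n g ω}).toReal ≤
        C * Real.exp (-(ε ^ 2 * (φ n : ℝ)) / (cγ * γ ^ 2 + cA * ε * A))

variable {P : Measure Ω} {Z : ℤ → Ω → E}

lemma popMean_le_add [IsProbabilityMeasure P] {f g : E → ℝ} {r : ℝ}
    (hg : Integrable (fun ω => g (Z 1 ω)) P) (hf : Integrable (fun ω => f (Z 1 ω)) P)
    (h : ∀ x, |g x - f x| ≤ r) : popMean P Z g ≤ popMean P Z f + r := by
  calc popMean P Z g ≤ ∫ ω, (f (Z 1 ω) + r) ∂P :=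
        integral_mono hg (hf.add (integrable_const r))
          fun ω => by linarith [(abs_le.mp (h (Z 1 ω))).2]
    _ = popMean P Z f + r := by
        rw [integral_add hf (integrable_const r), integral_const, probReal_univ, one_smul]; rfl

lemma ae_forall_ge_one_of_measurePreserving {T : Ω → Ω} (hT : MeasurePreserving T P P)
    (hTZ : ∀ t ω, Z (t + 1) ω = Z t (T ω)) {q : E → Prop} (h : ∀ᵐ ω ∂P, q (Z 1 ω)) :
    ∀ᵐ ω ∂P, ∀ i : ℕ, 1 ≤ i → q (Z i ω) := by
  have hshift (j : ℕ) : ∀ᵐ ω ∂P, q (Z (1 + j) ω) := by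
    induction j with
    | zero => simpa using h
    | succ j ih =>
      filter_upwards [hT.quasiMeasurePreserving.ae ih] with ω hω
      rwa [Nat.cast_succ, ← add_assoc, hTZ]
  filter_upwards [ae_all_iff.mpr hshift] with ω hω i hi
  obtain ⟨j, rfl⟩ := Nat.exists_eq_add_of_le hi
  simpa using hω j

lemma memLp_top_of_ae_abs_sub_le {f : Ω → ℝ} (hf : AEStronglyMeasurable f P) {c C : ℝ}
    (h : ∀ᵐ ω ∂P, |f ω - c| ≤ C) : MemLp f ⊤ P :=
  memLp_top_of_bound hf (|c| + C) <| by
    filter_upwards [h] with ω hω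
    rw [Real.norm_eq_abs]
    linarith [abs_sub_abs_le_abs_sub (f ω) c]

lemma integral_nonneg_of_integral_sq_le {f : Ω → ℝ} {C₂ : ℝ} (hC₂ : 0 ≤ C₂)
    (hf2 : Integrable (fun ω => f ω ^ 2) P) (h : ∫ ω, f ω ^ 2 ∂P ≤ C₂ * ∫ ω, f ω ∂P) :
    0 ≤ ∫ ω, f ω ∂P := by
  by_contra! hneg
  have hsq : ∫ ω, f ω ^ 2 ∂P = 0 :=
    le_antisymm (h.trans (mul_nonpos_of_nonneg_of_nonpos hC₂ hneg.le))
      (integral_nonneg fun _ => sq_nonneg _)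
  have hf0 : f =ᵐ[P] 0 := by
    filter_upwards [(integral_eq_zero_iff_of_nonneg (fun _ => sq_nonneg _) hf2).mp hsq]
      with ω hω
    simpa using hω
  simp [integral_congr_ae hf0] at hneg

lemma measure_le_of_bernsteinCondition [MeasurableSpace E] [IsProbabilityMeasure P]
    {φ : ℕ → ℕ} {C cγ cA : ℝ} {n₀ : ℕ} (hB : BernsteinCondition P Z φ C cγ cA n₀)
    (hZ1 : Measurable (Z 1)) {g : E → ℝ} (hg : Measurable g) {C₁ C₂ : ℝ} (hC₁ : 0 < C₁)
    (hdev : ∀ᵐ ω ∂P, ∀ i : ℕ, 1 ≤ i → |g (Z i ω) - popMean P Z g| ≤ C₁)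
    (hvar : ∫ ω, g (Z 1 ω) ^ 2 ∂P ≤ C₂ * popMean P Z g)
    {t : ℝ} (ht : 0 < t) {n : ℕ} (hn : n₀ ≤ n) (hn1 : n ≠ 0) :
    P {ω | t ≤ popMean P Z g - empMean Z n g ω} ≤
      ENNReal.ofReal (C * exp (-(t ^ 2 * φ n) / (cγ * (C₂ * popMean P Z g) + cA * t * C₁))) := by
  set m := popMean P Z g
  set h : E → ℝ := fun z => max (-C₁) (min C₁ (m - g z))
  have hclamp (x : ℝ) (hx : |x - m| ≤ C₁) : max (-C₁) (min C₁ (m - x)) = m - x := by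
    obtain ⟨h1, h2⟩ := abs_le.mp hx
    rw [min_eq_right (by linarith), max_eq_right (by linarith)]
  have hae : ∀ᵐ ω ∂P, ∀ i : ℕ, 1 ≤ i → h (Z i ω) = m - g (Z i ω) := by
    filter_upwards [hdev] with ω hω i hi using hclamp _ (hω i hi)
  have hae1 : (fun ω => h (Z 1 ω)) =ᵐ[P] fun ω => m - g (Z 1 ω) := by
    filter_upwards [hae] with ω hω using hω 1 le_rfl
  have hgZ : AEStronglyMeasurable (fun ω => g (Z 1 ω)) P := (hg.comp hZ1).aestronglyMeasurable
  have hint : Integrable (fun ω => g (Z 1 ω)) P := by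
    refine (memLp_top_of_ae_abs_sub_le hgZ (c := m) (C := C₁) ?_).integrable le_top
    filter_upwards [hdev] with ω hω using hω 1 le_rfl
  have hmean : popMean P Z h = 0 := by
    rw [popMean, integral_congr_ae hae1, integral_sub (integrable_const m) hint]
    simp [m, popMean]
  have hCm : 0 ≤ C₂ * m := (integral_nonneg fun _ => sq_nonneg _).trans hvar
  have hsq : ∫ ω, h (Z 1 ω) ^ 2 ∂P ≤ √(C₂ * m) ^ 2 := by
    rw [Real.sq_sqrt hCm]
    calc ∫ ω, h (Z 1 ω) ^ 2 ∂P = ProbabilityTheory.variance (fun ω => g (Z 1 ω)) P := by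
          rw [ProbabilityTheory.variance_eq_integral hgZ.aemeasurable]
          refine integral_congr_ae ?_
          filter_upwards [hae1] with ω hω
          rw [hω]
          change (m - _) ^ 2 = (_ - m) ^ 2
          ring
      _ ≤ ∫ ω, g (Z 1 ω) ^ 2 ∂P := ProbabilityTheory.variance_le_expectation_sq hgZ
      _ ≤ C₂ * m := hvar
  have hmeas : Measurable h :=
    measurable_const.max (measurable_const.min (measurable_const.sub hg))
  have hbdd (z : E) : |h z| ≤ C₁ :=
    abs_le.mpr ⟨le_max_left _ _, max_le (by linarith) (min_le_left _ _)⟩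
  have hevent : {ω | t ≤ m - empMean Z n g ω} =ᵐ[P] {ω | t ≤ empMean Z n h ω} := by
    refine Filter.eventuallyEq_set.mpr ?_
    filter_upwards [hae] with ω hω
    rw [empMean_eq_const_sub hn1 fun i hi => hω i (Finset.mem_Icc.mp hi).1]
  have hbound := hB h √(C₂ * m) C₁ (Real.sqrt_nonneg _) hC₁ hmeas hbdd hmean hsq t ht n hn
  rw [Real.sq_sqrt hCm] at hbound
  rw [measure_congr hevent, ← ENNReal.ofReal_toReal (measure_ne_top P _)]
  exact ENNReal.ofReal_le_ofReal hbound

lemma measure_deviation_le [MeasurableSpace E] [IsProbabilityMeasure P]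
    {φ : ℕ → ℕ} {C cγ cA : ℝ} {n₀ : ℕ} (hB : BernsteinCondition P Z φ C cγ cA n₀)
    (hC : 0 ≤ C) (hcγ : 0 ≤ cγ) (hcA : 0 < cA)
    (hZ1 : Measurable (Z 1)) {g : E → ℝ} (hg : Measurable g) {C₁ C₂ : ℝ} (hC₁ : 0 ≤ C₁)
    (hC₂ : 0 ≤ C₂) (hdev : ∀ᵐ ω ∂P, ∀ i : ℕ, 1 ≤ i → |g (Z i ω) - popMean P Z g| ≤ C₁)
    (hvar : ∫ ω, g (Z 1 ω) ^ 2 ∂P ≤ C₂ * popMean P Z g) (hm : 0 ≤ popMean P Z g)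
    {u ε : ℝ} (hε : 0 < ε) (hu : 0 < u) (hu1 : u ≤ 1) {n : ℕ} (hn : n₀ ≤ n) (hn1 : n ≠ 0) :
    P {ω | u * √ε * √(popMean P Z g + ε) ≤ popMean P Z g - empMean Z n g ω} ≤
      ENNReal.ofReal (C * exp (-(u ^ 2 * ε * φ n) / (cγ * C₂ + cA * C₁))) := by
  rcases hC₁.eq_or_lt with rfl | hC₁
  -- (A4) needs a positive bound `A`; for `C₁ = 0` every `g(Zᵢ)` equals its mean almost surely.
  · refine le_of_eq_of_le (measure_eq_zero_iff_ae_notMem.mpr ?_) zero_le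
    filter_upwards [hdev] with ω hω hle
    have hconst : empMean Z n (fun _ => 0) ω = popMean P Z g - empMean Z n g ω :=
      empMean_eq_const_sub hn1 fun i hi => by
        linarith [abs_nonpos_iff.mp (hω i (Finset.mem_Icc.mp hi).1)]
    have : 0 < u * √ε * √(popMean P Z g + ε) := by positivity
    simp only [empMean, Finset.sum_const_zero, mul_zero] at hconst
    exact absurd (hle.trans_eq hconst.symm) this.not_ge
  · refine (measure_le_of_bernsteinCondition hB hZ1 hg hC₁ hdev hvar (by positivity) hn
      hn1).trans (ENNReal.ofReal_le_ofReal (mul_le_mul_of_nonneg_left ?_ hC))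
    exact Real.exp_le_exp.mpr
      (bernstein_exponent_le hcγ hcA hC₁ hC₂ hm hε hu hu1 (Nat.cast_nonneg _))

lemma measure_setOf_le_biSup_le [MeasurableSpace E] [IsProbabilityMeasure P]
    {φ : ℕ → ℕ} {C cγ cA : ℝ} {n₀ : ℕ} (hB : BernsteinCondition P Z φ C cγ cA n₀)
    (hC : 0 < C) (hcγ : 0 ≤ cγ) (hcA : 0 < cA) (hZ1 : Measurable (Z 1)) {G : Set (E → ℝ)}
    {C₁ C₂ : ℝ} (hC₁ : 0 ≤ C₁) (hC₂ : 0 ≤ C₂) (hGmeas : ∀ g ∈ G, Measurable g)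
    (hdev : ∀ g ∈ G, ∀ᵐ ω ∂P, ∀ i : ℕ, 1 ≤ i → |g (Z i ω) - popMean P Z g| ≤ C₁)
    (hvar : ∀ g ∈ G, ∫ ω, g (Z 1 ω) ^ 2 ∂P ≤ C₂ * popMean P Z g)
    {u ε : ℝ} (hε : 0 < ε) (hu : 0 < u) (hu1 : u ≤ 1) {n : ℕ} (hn : n₀ ≤ n) (hn1 : n ≠ 0) :
    P {ω | 4 * u * √ε ≤ ⨆ g ∈ G, (popMean P Z g - empMean Z n g ω) / √(popMean P Z g + ε)} ≤
      ENNReal.ofReal C * (coveringNumber G (u * ε) : ℝ≥0∞) *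
        ENNReal.ofReal (exp (-(u ^ 2 * ε * φ n) / (cγ * C₂ + cA * C₁))) := by
  set B := exp (-(u ^ 2 * ε * φ n) / (cγ * C₂ + cA * C₁))
  have hmem (g) (hg : g ∈ G) : MemLp (fun ω => g (Z 1 ω)) ⊤ P := by
    refine memLp_top_of_ae_abs_sub_le ((hGmeas g hg).comp hZ1).aestronglyMeasurable
      (c := popMean P Z g) (C := C₁) ?_
    filter_upwards [hdev g hg] with ω hω using hω 1 le_rfl
  have hM0 (g) (hg : g ∈ G) : 0 ≤ popMean P Z g :=
    integral_nonneg_of_integral_sq_le hC₂ ((hmem g hg).mono_exponent le_top).integrable_sq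
      (hvar g hg)
  have hM (g) (hg : g ∈ G) (g') (hg' : g' ∈ G) (r : ℝ) (hr : ∀ x, |g x - g' x| ≤ r) :
      popMean P Z g ≤ popMean P Z g' + r :=
    popMean_le_add ((hmem g hg).integrable le_top) ((hmem g' hg').integrable le_top) hr
  have hp : ENNReal.ofReal C * ENNReal.ofReal B ≠ 0 :=
    mul_ne_zero (ENNReal.ofReal_pos.mpr hC).ne' (ENNReal.ofReal_pos.mpr (exp_pos _)).ne'
  calc P _ ≤ (coveringNumber G (u * ε) : ℝ≥0∞) * (ENNReal.ofReal C * ENNReal.ofReal B) := by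
        refine le_coveringNumber_mul hp fun k f hf => ?_
        obtain ⟨S, hSk, hSG, hnet⟩ := exists_finset_net_near_max
          (fun g hg g' hg' => hM g hg g' hg' _) (by positivity : 0 < u * ε / 8) f hf
        calc P _ ≤ P (⋃ g ∈ S, _) := measure_mono (setOf_le_biSup_subset_biUnion hε hu hu1
              hSG hM0 (fun g hg g' hg' => hM g hg g' hg' _) hnet)
          _ ≤ ∑ g ∈ S, P _ := measure_biUnion_finset_le _ _
          _ ≤ ∑ g ∈ S, ENNReal.ofReal (C * B) := Finset.sum_le_sum fun g hg =>
              measure_deviation_le hB hC.le hcγ hcA hZ1 (hGmeas g (hSG hg)) hC₁ hC₂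
                (hdev g (hSG hg)) (hvar g (hSG hg)) (hM0 g (hSG hg)) hε hu hu1 hn hn1
          _ ≤ k * (ENNReal.ofReal C * ENNReal.ofReal B) := by
              rw [Finset.sum_const, nsmul_eq_mul, ENNReal.ofReal_mul hC.le]
              gcongr
    _ = _ := by ring

end Stationary

theorem stmt5_general
    {Ω : Type*} [MeasurableSpace Ω] (P : Measure Ω) [IsProbabilityMeasure P]
    (d : ℕ)
    (Z : ℤ → Ω → (Fin d → ℝ) × ℝ) (hZmeas : ∀ t, Measurable (Z t))
    (T : Ω → Ω) (hT : Ergodic T P) (hTZ : ∀ t ω, Z (t + 1) ω = Z t (T ω))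
    (φ : ℕ → ℕ)
    (C cγ cA : ℝ) (hC : 0 < C) (hcγ : 0 < cγ) (hcA : 0 < cA)
    (n₀ : ℕ) (hn₀ : 1 ≤ n₀)
    (hA4 : ∀ (g : (Fin d → ℝ) × ℝ → ℝ) (γ A : ℝ), 0 ≤ γ → 0 < A → Measurable g →
      (∀ z, |g z| ≤ A) → (∫ ω, g (Z 1 ω) ∂P) = 0 → (∫ ω, g (Z 1 ω) ^ 2 ∂P) ≤ γ ^ 2 →
      ∀ ε : ℝ, 0 < ε → ∀ n : ℕ, n₀ ≤ n →
        (P {ω | ε ≤ (n : ℝ)⁻¹ * ∑ i ∈ Finset.Icc 1 n, g (Z i ω)}).toReal ≤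
          C * Real.exp (-(ε ^ 2 * (φ n : ℝ)) / (cγ * γ ^ 2 + cA * ε * A)))
    (G : Set ((Fin d → ℝ) × ℝ → ℝ)) (C₁ C₂ : ℝ) (hC₁ : 0 ≤ C₁) (hC₂ : 0 ≤ C₂)
    (hGmeas : ∀ g ∈ G, Measurable g)
    (hGdev : ∀ g ∈ G, ∀ᵐ ω ∂P, |g (Z 1 ω) - ∫ ω', g (Z 1 ω') ∂P| ≤ C₁)
    (hGvar : ∀ g ∈ G, (∫ ω, g (Z 1 ω) ^ 2 ∂P) ≤ C₂ * ∫ ω, g (Z 1 ω) ∂P) :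
    ∃ c : ℝ, 0 < c ∧ ∀ ε : ℝ, 0 < ε → ∀ u : ℝ, 0 < u → u ≤ 1 → ∀ n : ℕ, n₀ ≤ n →
      P {ω | 4 * u * Real.sqrt ε ≤
          ⨆ g ∈ G, ((∫ ω', g (Z 1 ω') ∂P) -
              (n : ℝ)⁻¹ * ∑ i ∈ Finset.Icc 1 n, g (Z i ω)) /
            Real.sqrt ((∫ ω', g (Z 1 ω') ∂P) + ε)} ≤
        ENNReal.ofReal c * (coveringNumber G (u * ε) : ℝ≥0∞) *
          ENNReal.ofReal (Real.exp (-(u ^ 2 * ε * (φ n : ℝ)) / (cγ * C₂ + cA * C₁))) := by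
  have hB : BernsteinCondition P Z φ C cγ cA n₀ := hA4
  have hdev (g) (hg : g ∈ G) : ∀ᵐ ω ∂P, ∀ i : ℕ, 1 ≤ i → |g (Z i ω) - popMean P Z g| ≤ C₁ :=
    ae_forall_ge_one_of_measurePreserving (q := fun z => |g z - popMean P Z g| ≤ C₁)
      hT.toMeasurePreserving hTZ (hGdev g hg)
  exact ⟨C, hC, fun ε hε u hu hu1 n hn =>
    measure_setOf_le_biSup_le hB hC hcγ.le hcA (hZmeas 1) hC₁ hC₂ hGmeas hdev hGvar
      hε hu hu1 hn (by omega)⟩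

theorem stmt5
    {Ω : Type*} [MeasurableSpace Ω] (P : Measure Ω) [IsProbabilityMeasure P]
    (d : ℕ) (hd : 0 < d)
    (Z : ℤ → Ω → (Fin d → ℝ) × ℝ) (hZmeas : ∀ t, Measurable (Z t))
    (Xset : Set (Fin d → ℝ)) (Yset : Set ℝ)
    (hZmem : ∀ t ω, (Z t ω).1 ∈ Xset ∧ (Z t ω).2 ∈ Yset)
    (T : Ω → Ω) (hT : Ergodic T P) (hTZ : ∀ t ω, Z (t + 1) ω = Z t (T ω))
    (φ : ℕ → ℕ) (hφmono : Monotone φ) (hφle : ∀ n, φ n ≤ n) (hφpos : ∀ n, 1 ≤ φ n)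
    (C cγ cA : ℝ) (hC : 0 < C) (hcγ : 0 < cγ) (hcA : 0 < cA)
    (n₀ : ℕ) (hn₀ : 1 ≤ n₀)
    (hA4 : ∀ (g : (Fin d → ℝ) × ℝ → ℝ) (γ A : ℝ), 0 ≤ γ → 0 < A → Measurable g →
      (∀ z, |g z| ≤ A) → (∫ ω, g (Z 1 ω) ∂P) = 0 → (∫ ω, g (Z 1 ω) ^ 2 ∂P) ≤ γ ^ 2 →
      ∀ ε : ℝ, 0 < ε → ∀ n : ℕ, n₀ ≤ n →
        (P {ω | ε ≤ (n : ℝ)⁻¹ * ∑ i ∈ Finset.Icc 1 n, g (Z i ω)}).toReal ≤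
          C * Real.exp (-(ε ^ 2 * (φ n : ℝ)) / (cγ * γ ^ 2 + cA * ε * A)))
    (G : Set ((Fin d → ℝ) × ℝ → ℝ)) (C₁ C₂ : ℝ) (hC₁ : 0 ≤ C₁) (hC₂ : 0 ≤ C₂)
    (hGmeas : ∀ g ∈ G, Measurable g)
    (hGdev : ∀ g ∈ G, ∀ᵐ ω ∂P, |g (Z 1 ω) - ∫ ω', g (Z 1 ω') ∂P| ≤ C₁)
    (hGvar : ∀ g ∈ G, (∫ ω, g (Z 1 ω) ^ 2 ∂P) ≤ C₂ * ∫ ω, g (Z 1 ω) ∂P) :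
    ∃ c : ℝ, 0 < c ∧ ∀ ε : ℝ, 0 < ε → ∀ u : ℝ, 0 < u → u ≤ 1 → ∀ n : ℕ, n₀ ≤ n →
      P {ω | 4 * u * Real.sqrt ε ≤
          ⨆ g ∈ G, ((∫ ω', g (Z 1 ω') ∂P) -
              (n : ℝ)⁻¹ * ∑ i ∈ Finset.Icc 1 n, g (Z i ω)) /
            Real.sqrt ((∫ ω', g (Z 1 ω') ∂P) + ε)} ≤
        ENNReal.ofReal c * (coveringNumber G (u * ε) : ℝ≥0∞) *
          ENNReal.ofReal (Real.exp (-(u ^ 2 * ε * (φ n : ℝ)) / (cγ * C₂ + cA * C₁))) :=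
  stmt5_general P d Z hZmeas T hT hTZ φ C cγ cA hC hcγ hcA n₀ hn₀ hA4 G C₁ C₂ hC₁ hC₂ hGmeas hGdev
    hGvar
end

section
/- Let H be a class of measurable functions from X to ℝ containing a risk minimizer h_H = argmin_{h∈H} R(h), and let ĥ = argmin_{h∈H} (1/n)Σ_{i=1}^n ℓ(h(X_i),Y_i) be the empirical risk minimizer over H. Then E[R(ĥ) − R(h*)] ≤ E_{D_n}[ (1/n)Σ_{i=1}^n ( E_{D'_n}[g(ĥ,Z'_i)] − 2 g(ĥ,Z_i) ) ] + 2 (R(h_H) − R(h*)). -/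
open MeasureTheory Real
open scoped BigOperators Classical ENNReal NNReal

/-!
Integrating the ghost sample out turns the first part of each summand into `R(ĥ) - R(h*)`, so
the integrand equals `R(ĥ) - R(h*) - 2 (R̂ₙ(ĥ) - R̂ₙ(h*))`. The ERM property bounds `R̂ₙ(ĥ)` by
`R̂ₙ(h_H)`, and for a fixed predictor stationarity gives `E R̂ₙ(h) = R(h)`, which produces the
term `2 (R(h_H) - R(h*))`.
-/

section ERM

variable {Ω Ω' : Type*} {d : ℕ} {Z : ℤ → Ω → (Fin d → ℝ) × ℝ} {ℓ : ℝ → ℝ → ℝ}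
  {h hstar : (Fin d → ℝ) → ℝ} {n : ℕ}

theorem inv_mul_sum_sub_two_mul_lossDiff (hn : 0 < n) (c : ℕ → ℝ) {r : ℝ}
    (hc : ∀ i ∈ Finset.Icc 1 n, c i = r) (ω : Ω) :
    (n : ℝ)⁻¹ * ∑ i ∈ Finset.Icc 1 n, (c i - 2 * lossDiff ℓ hstar h (Z i ω)) =
      r - 2 * (empRisk Z ℓ n h ω - empRisk Z ℓ n hstar ω) := by
  simp only [empRisk, lossDiff, Finset.sum_sub_distrib, Finset.sum_congr rfl hc,
    ← Finset.mul_sum, Finset.sum_const, Nat.card_Icc, add_tsub_cancel_right, nsmul_eq_mul]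
  field_simp

variable [MeasurableSpace Ω] [MeasurableSpace Ω'] {P : Measure Ω} {P' : Measure Ω'}

theorem integral_loss_eq_risk_of_map_eq {W : Ω' → (Fin d → ℝ) × ℝ}
    (hℓ : Measurable fun p : ℝ × ℝ => ℓ p.1 p.2) (hh : Measurable h)
    (hW : AEMeasurable W P') (hZ₀ : AEMeasurable (Z 0) P)
    (hmap : Measure.map W P' = Measure.map (Z 0) P) :
    ∫ ω', ℓ (h (W ω').1) (W ω').2 ∂P' = risk P Z ℓ h :=
  ((ProbabilityTheory.IdentDistrib.mk hW hZ₀ hmap).comp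
    (hℓ.comp ((hh.comp measurable_fst).prodMk measurable_snd))).integral_eq

theorem integral_lossDiff_eq_sub_risk_of_map_eq {W : Ω' → (Fin d → ℝ) × ℝ}
    (hℓ : Measurable fun p : ℝ × ℝ => ℓ p.1 p.2) (hh : Measurable h) (hhstar : Measurable hstar)
    (hW : AEMeasurable W P') (hZ₀ : AEMeasurable (Z 0) P)
    (hmap : Measure.map W P' = Measure.map (Z 0) P)
    (hint : Integrable (fun ω' => ℓ (h (W ω').1) (W ω').2) P')
    (hint_star : Integrable (fun ω' => ℓ (hstar (W ω').1) (W ω').2) P') :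
    ∫ ω', lossDiff ℓ hstar h (W ω') ∂P' = risk P Z ℓ h - risk P Z ℓ hstar := by
  simp only [lossDiff]
  rw [integral_sub hint hint_star, integral_loss_eq_risk_of_map_eq hℓ hh hW hZ₀ hmap,
    integral_loss_eq_risk_of_map_eq hℓ hhstar hW hZ₀ hmap]

theorem integrable_empRisk
    (hint : ∀ i ∈ Finset.Icc 1 n, Integrable (fun ω => ℓ (h (Z i ω).1) (Z i ω).2) P) :
    Integrable (empRisk Z ℓ n h) P :=
  (integrable_finsetSum _ hint).const_mul _

theorem integral_empRisk (hn : 0 < n) (hℓ : Measurable fun p : ℝ × ℝ => ℓ p.1 p.2)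
    (hh : Measurable h) (hZ : ∀ t, AEMeasurable (Z t) P)
    (hstat : ∀ t, Measure.map (Z t) P = Measure.map (Z 0) P)
    (hint : ∀ i ∈ Finset.Icc 1 n, Integrable (fun ω => ℓ (h (Z i ω).1) (Z i ω).2) P) :
    ∫ ω, empRisk Z ℓ n h ω ∂P = risk P Z ℓ h := by
  simp only [empRisk]
  rw [integral_const_mul, integral_finsetSum _ hint]
  simp only [integral_loss_eq_risk_of_map_eq hℓ hh (hZ _) (hZ 0) (hstat _), Finset.sum_const,
    Nat.card_Icc, add_tsub_cancel_right, nsmul_eq_mul]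
  field_simp

end ERM

theorem stmt6_general
    {Ω : Type*} [MeasurableSpace Ω] (P : Measure Ω) [IsProbabilityMeasure P]
    (d : ℕ)
    (Z : ℤ → Ω → (Fin d → ℝ) × ℝ) (hZmeas : ∀ t, Measurable (Z t))
    (ℓ : ℝ → ℝ → ℝ) (hℓmeas : Measurable fun p : ℝ × ℝ => ℓ p.1 p.2)
    (hstar : (Fin d → ℝ) → ℝ) (hstarMeas : Measurable hstar)
    {Ω' : Type*} [MeasurableSpace Ω'] (P' : Measure Ω')
    (Z' : ℤ → Ω' → (Fin d → ℝ) × ℝ) (hZ'meas : ∀ t, Measurable (Z' t))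
    (hstat : ∀ t : ℤ, Measure.map (Z t) P = Measure.map (Z 0) P)
    (hcopy : ∀ t : ℤ, Measure.map (Z' t) P' = Measure.map (Z 0) P)
    (n : ℕ) (hn : 0 < n)
    (H : Set ((Fin d → ℝ) → ℝ)) (hH : ∀ h ∈ H, Measurable h)
    (hH₀ : (Fin d → ℝ) → ℝ) (hH₀mem : hH₀ ∈ H)
    (hhat : Ω → (Fin d → ℝ) → ℝ)
    (hhatERM : ∀ ω, hhat ω ∈ H ∧ ∀ h ∈ H, empRisk Z ℓ n (hhat ω) ω ≤ empRisk Z ℓ n h ω)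
    (hInt1 : Integrable (fun ω => risk P Z ℓ (hhat ω)) P)
    (hInt2 : Integrable (fun ω => (n : ℝ)⁻¹ * ∑ i ∈ Finset.Icc 1 n,
      ((∫ ω', lossDiff ℓ hstar (hhat ω) (Z' i ω') ∂P') -
        2 * lossDiff ℓ hstar (hhat ω) (Z i ω))) P)
    (hInt3 : ∀ h ∈ H, ∀ i ∈ Finset.Icc 1 n,
      Integrable (fun ω => ℓ (h (Z i ω).1) (Z i ω).2) P)
    (hInt4 : ∀ i ∈ Finset.Icc 1 n, Integrable (fun ω => ℓ (hstar (Z i ω).1) (Z i ω).2) P)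
    (hInt5 : ∀ ω, ∀ i ∈ Finset.Icc 1 n,
      Integrable (fun ω' => ℓ ((hhat ω) (Z' i ω').1) (Z' i ω').2) P')
    (hInt6 : ∀ i ∈ Finset.Icc 1 n,
      Integrable (fun ω' => ℓ (hstar (Z' i ω').1) (Z' i ω').2) P') :
    (∫ ω, risk P Z ℓ (hhat ω) ∂P) - risk P Z ℓ hstar ≤
      (∫ ω, (n : ℝ)⁻¹ * ∑ i ∈ Finset.Icc 1 n,
        ((∫ ω', lossDiff ℓ hstar (hhat ω) (Z' i ω') ∂P') -
          2 * lossDiff ℓ hstar (hhat ω) (Z i ω)) ∂P) +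
      2 * (risk P Z ℓ hH₀ - risk P Z ℓ hstar) := by
  have hZ : ∀ t, AEMeasurable (Z t) P := fun t => (hZmeas t).aemeasurable
  have hlower : ∀ ω, risk P Z ℓ (hhat ω) - risk P Z ℓ hstar -
      2 * (empRisk Z ℓ n hH₀ ω - empRisk Z ℓ n hstar ω) ≤
      (n : ℝ)⁻¹ * ∑ i ∈ Finset.Icc 1 n,
        ((∫ ω', lossDiff ℓ hstar (hhat ω) (Z' i ω') ∂P') -
          2 * lossDiff ℓ hstar (hhat ω) (Z i ω)) := fun ω => by
    rw [inv_mul_sum_sub_two_mul_lossDiff hn _ fun i hi =>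
      integral_lossDiff_eq_sub_risk_of_map_eq hℓmeas (hH _ (hhatERM ω).1) hstarMeas
        (hZ'meas i).aemeasurable (hZ 0) (hcopy i) (hInt5 ω i hi) (hInt6 i hi)]
    linarith [(hhatERM ω).2 hH₀ hH₀mem]
  have hEmp₀ := integrable_empRisk (hInt3 hH₀ hH₀mem)
  have hEmpStar := integrable_empRisk hInt4
  have hExcess := hInt1.sub' (integrable_const (risk P Z ℓ hstar))
  have hEmpGap := (hEmp₀.sub' hEmpStar).const_mul 2
  have hlower_mean : ∫ ω, (risk P Z ℓ (hhat ω) - risk P Z ℓ hstar -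
      2 * (empRisk Z ℓ n hH₀ ω - empRisk Z ℓ n hstar ω)) ∂P =
      (∫ ω, risk P Z ℓ (hhat ω) ∂P) - risk P Z ℓ hstar -
        2 * (risk P Z ℓ hH₀ - risk P Z ℓ hstar) := by
    rw [integral_sub hExcess hEmpGap, integral_sub hInt1 (integrable_const _), integral_const_mul,
      integral_sub hEmp₀ hEmpStar,
      integral_empRisk hn hℓmeas (hH _ hH₀mem) hZ hstat (hInt3 hH₀ hH₀mem),
      integral_empRisk hn hℓmeas hstarMeas hZ hstat hInt4, integral_const, probReal_univ,
      one_smul]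
  linarith [integral_mono (hExcess.sub' hEmpGap) hInt2 hlower]

theorem stmt6
    {Ω : Type*} [MeasurableSpace Ω] (P : Measure Ω) [IsProbabilityMeasure P]
    (d : ℕ) (hd : 0 < d)
    (Z : ℤ → Ω → (Fin d → ℝ) × ℝ) (hZmeas : ∀ t, Measurable (Z t))
    (Xset : Set (Fin d → ℝ)) (Yset : Set ℝ)
    (hZmem : ∀ t ω, (Z t ω).1 ∈ Xset ∧ (Z t ω).2 ∈ Yset)
    (T : Ω → Ω) (hT : Ergodic T P) (hTZ : ∀ t ω, Z (t + 1) ω = Z t (T ω))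
    (ℓ : ℝ → ℝ → ℝ) (hℓmeas : Measurable fun p : ℝ × ℝ => ℓ p.1 p.2)
    (hℓnonneg : ∀ u y, 0 ≤ ℓ u y)
    (hstar : (Fin d → ℝ) → ℝ) (hstarMeas : Measurable hstar)
    (hstarMem : ∀ x ∈ Xset, hstar x ∈ Yset)
    (hstarMin : ∀ h : (Fin d → ℝ) → ℝ, Measurable h → (∀ x ∈ Xset, h x ∈ Yset) →
      risk P Z ℓ hstar ≤ risk P Z ℓ h)
    {Ω' : Type*} [MeasurableSpace Ω'] (P' : Measure Ω') [IsProbabilityMeasure P']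
    (Z' : ℤ → Ω' → (Fin d → ℝ) × ℝ) (hZ'meas : ∀ t, Measurable (Z' t))
    (hstat : ∀ t : ℤ, Measure.map (Z t) P = Measure.map (Z 0) P)
    (hcopy : ∀ t : ℤ, Measure.map (Z' t) P' = Measure.map (Z 0) P)
    (n : ℕ) (hn : 0 < n)
    (H : Set ((Fin d → ℝ) → ℝ)) (hH : ∀ h ∈ H, Measurable h)
    (hH₀ : (Fin d → ℝ) → ℝ) (hH₀mem : hH₀ ∈ H)
    (hH₀min : ∀ h ∈ H, risk P Z ℓ hH₀ ≤ risk P Z ℓ h)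
    (hhat : Ω → (Fin d → ℝ) → ℝ)
    (hhatERM : ∀ ω, hhat ω ∈ H ∧ ∀ h ∈ H, empRisk Z ℓ n (hhat ω) ω ≤ empRisk Z ℓ n h ω)
    (hInt1 : Integrable (fun ω => risk P Z ℓ (hhat ω)) P)
    (hInt2 : Integrable (fun ω => (n : ℝ)⁻¹ * ∑ i ∈ Finset.Icc 1 n,
      ((∫ ω', lossDiff ℓ hstar (hhat ω) (Z' i ω') ∂P') -
        2 * lossDiff ℓ hstar (hhat ω) (Z i ω))) P)
    (hInt3 : ∀ h ∈ H, ∀ i ∈ Finset.Icc 1 n,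
      Integrable (fun ω => ℓ (h (Z i ω).1) (Z i ω).2) P)
    (hInt4 : ∀ i ∈ Finset.Icc 1 n, Integrable (fun ω => ℓ (hstar (Z i ω).1) (Z i ω).2) P)
    (hInt5 : ∀ ω, ∀ i ∈ Finset.Icc 1 n,
      Integrable (fun ω' => ℓ ((hhat ω) (Z' i ω').1) (Z' i ω').2) P')
    (hInt6 : ∀ i ∈ Finset.Icc 1 n,
      Integrable (fun ω' => ℓ (hstar (Z' i ω').1) (Z' i ω').2) P') :
    (∫ ω, risk P Z ℓ (hhat ω) ∂P) - risk P Z ℓ hstar ≤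
      (∫ ω, (n : ℝ)⁻¹ * ∑ i ∈ Finset.Icc 1 n,
        ((∫ ω', lossDiff ℓ hstar (hhat ω) (Z' i ω') ∂P') -
          2 * lossDiff ℓ hstar (hhat ω) (Z i ω)) ∂P) +
      2 * (risk P Z ℓ hH₀ - risk P Z ℓ hstar) :=
  stmt6_general P d Z hZmeas ℓ hℓmeas hstar hstarMeas P' Z' hZ'meas hstat hcopy n hn H hH hH₀ hH₀mem
    hhat hhatERM hInt1 hInt2 hInt3 hInt4 hInt5 hInt6
end
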